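/- arXiv:2506.17940 — 4 statements merged into one kernel-verified Lean document; each statement's English description precedes it below -/
import Mathlib

section
/- Let K ∈ ℕ with K ≥ 2. For all x, y ∈ ℝ^K, ‖softmax(x) − softmax(y)‖₂ ≤ ((K − 1)/K) · ‖x − y‖₂; that is, the softmax function on ℝ^K is Lipschitz continuous with respect to the Euclidean norm with Lipschitz constant at most (K − 1)/K. -/
open Finset

/-- The softmax function on `ℝ^K` (with the Euclidean norm structure). -/
noncomputable def softmax {K : ℕ} (x : EuclideanSpace ℝ (Fin K)) :
    EuclideanSpace ℝ (Fin K) :=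
  WithLp.toLp 2 (fun i => Real.exp (x i) / ∑ j, Real.exp (x j))

/-- Weighted Cauchy–Schwarz. -/
lemma sm_weighted_cs {K : ℕ} (E : Finset (Fin K)) (s w : Fin K → ℝ) (hs : ∀ i, 0 ≤ s i) :
    (∑ j ∈ E, s j * w j) ^ 2 ≤ (∑ j ∈ E, s j) * (∑ j ∈ E, s j * w j ^ 2) := by
  have h := Finset.sum_mul_sq_le_sq_mul_sq E (fun j => Real.sqrt (s j))
    (fun j => Real.sqrt (s j) * w j)
  have h1 : ∀ j ∈ E, Real.sqrt (s j) * (Real.sqrt (s j) * w j) = s j * w j := by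
    intro j _; rw [← mul_assoc, Real.mul_self_sqrt (hs j)]
  have h2 : ∀ j ∈ E, Real.sqrt (s j) ^ 2 = s j := fun j _ => Real.sq_sqrt (hs j)
  have h3 : ∀ j ∈ E, (Real.sqrt (s j) * w j) ^ 2 = s j * w j ^ 2 := by
    intro j _; rw [mul_pow, Real.sq_sqrt (hs j)]
  rwa [Finset.sum_congr rfl h1, Finset.sum_congr rfl h2, Finset.sum_congr rfl h3] at h

lemma sm_stepA {K : ℕ} (s w : Fin K → ℝ) (hs0 : ∀ i, 0 ≤ s i) (hs1 : ∑ i, s i = 1)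
    (hw : ∑ i, s i * w i = 0) :
    ∑ i, (s i * w i) ^ 2 ≤ (1 / 2) * ∑ i, s i * w i ^ 2 := by
  by_cases h : ∀ i, s i ≤ 1 / 2
  · rw [Finset.mul_sum]
    refine Finset.sum_le_sum fun i _ => ?_
    have h1 := hs0 i; have h2 := h i
    nlinarith [mul_nonneg (mul_nonneg (by linarith : (0:ℝ) ≤ 1/2 - s i) h1) (sq_nonneg (w i))]
  · push_neg at h
    obtain ⟨i0, hi0⟩ := h
    set E := Finset.univ.erase i0 with hE
    set t := s i0 with ht
    set A := s i0 * w i0 ^ 2 with hA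
    set B := ∑ j ∈ E, s j * w j ^ 2 with hB
    have hs1' : s i0 + ∑ j ∈ E, s j = 1 := by
      rw [Finset.add_sum_erase _ s (Finset.mem_univ i0)]; exact hs1
    have hw' : s i0 * w i0 + ∑ j ∈ E, s j * w j = 0 := by
      rw [Finset.add_sum_erase _ (fun i => s i * w i) (Finset.mem_univ i0)]; exact hw
    have hEsum : ∑ j ∈ E, s j = 1 - t := by rw [ht]; linarith
    have hEw : ∑ j ∈ E, s j * w j = -(t * w i0) := by rw [ht]; linarith
    have hBnn : 0 ≤ B := Finset.sum_nonneg fun j _ => mul_nonneg (hs0 j) (sq_nonneg _)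
    have hAnn : 0 ≤ A := mul_nonneg (hs0 i0) (sq_nonneg _)
    have hCS : (t * w i0) ^ 2 ≤ (1 - t) * B := by
      have h1 := sm_weighted_cs E s w hs0
      rw [hEw, hEsum, ← hB] at h1
      simpa using h1
    have hjle : ∀ j ∈ E, s j ≤ 1 - t := by
      intro j hj
      calc s j ≤ ∑ k ∈ E, s k := Finset.single_le_sum (fun k _ => hs0 k) hj
      _ = 1 - t := hEsum
    have h2 : ∑ j ∈ E, (s j * w j) ^ 2 ≤ (1 - t) * B := by
      rw [hB, Finset.mul_sum]
      refine Finset.sum_le_sum fun j hj => ?_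
      have h3 := hjle j hj; have h4 := hs0 j
      nlinarith [mul_nonneg (mul_nonneg (by linarith : (0:ℝ) ≤ 1 - t - s j) h4) (sq_nonneg (w j))]
    have hLHS : ∑ i, (s i * w i) ^ 2 = (s i0 * w i0) ^ 2 + ∑ j ∈ E, (s j * w j) ^ 2 :=
      (Finset.add_sum_erase _ (fun i => (s i * w i) ^ 2) (Finset.mem_univ i0)).symm
    have hLHS : ∑ i, (s i * w i) ^ 2 = (t * w i0) ^ 2 + ∑ j ∈ E, (s j * w j) ^ 2 := by
      rw [hLHS, ht]
    have hRHS : ∑ i, s i * w i ^ 2 = A + B :=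
      (Finset.add_sum_erase _ (fun i => s i * w i ^ 2) (Finset.mem_univ i0)).symm
    have htA : t * A = (t * w i0) ^ 2 := by rw [hA]; ring
    have hAB : A ≤ B := by nlinarith
    rw [hLHS, hRHS]
    nlinarith [mul_nonneg (by linarith : (0:ℝ) ≤ t - 1/2) (by linarith : (0:ℝ) ≤ B - A)]

lemma sm_var_le {K : ℕ} (hK : 2 ≤ K) (s v : Fin K → ℝ) (hs0 : ∀ i, 0 ≤ s i)
    (hs1 : ∑ i, s i = 1) :
    ∑ i, s i * (v i - ∑ j, s j * v j) ^ 2 ≤ (1 / 2) * ∑ i, v i ^ 2 := by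
  have hK0 : 0 < K := by omega
  have : Nonempty (Fin K) := ⟨⟨0, hK0⟩⟩
  have hne : (Finset.univ : Finset (Fin K)).Nonempty := Finset.univ_nonempty
  set m := ∑ j, s j * v j with hm
  have hRHSnn : 0 ≤ ∑ i, v i ^ 2 := Finset.sum_nonneg fun i _ => sq_nonneg _
  obtain ⟨iM, -, hM⟩ := Finset.exists_max_image Finset.univ v hne
  obtain ⟨im, -, hmin⟩ := Finset.exists_min_image Finset.univ v hne
  have hw0 : ∑ i, s i * (v i - m) = 0 := by
    have : ∀ i, s i * (v i - m) = s i * v i - m * s i := fun i => by ring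
    simp_rw [this]
    rw [Finset.sum_sub_distrib, ← Finset.mul_sum, hs1, ← hm]; ring
  by_cases hcase : iM = im
  · have hconst : ∀ i, v i = v iM := fun i =>
      le_antisymm (hM i (Finset.mem_univ i)) (by rw [hcase]; exact hmin i (Finset.mem_univ i))
    have hmv : m = v iM := by
      rw [hm]
      have : ∀ i ∈ Finset.univ, s i * v i = s i * v iM := fun i _ => by rw [hconst i]
      rw [Finset.sum_congr rfl this, ← Finset.sum_mul, hs1, one_mul]
    have : ∀ i ∈ Finset.univ, s i * (v i - m) ^ 2 = 0 := by
      intro i _; rw [hmv, hconst i]; ring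
    rw [Finset.sum_congr rfl this]
    simp
    linarith
  · set c := (v iM + v im) / 2 with hc
    set D := ((v iM - v im) / 2) ^ 2 with hD
    have hptw : ∀ i, (v i - c) ^ 2 ≤ D := by
      intro i
      apply sq_le_sq'
      · have := hmin i (Finset.mem_univ i); rw [hc]; linarith
      · have := hM i (Finset.mem_univ i); rw [hc]; linarith
    have hexp : ∑ i, s i * (v i - c) ^ 2 = (∑ i, s i * (v i - m) ^ 2) + (m - c) ^ 2 := by
      have key : ∀ i, s i * (v i - c) ^ 2 =
          s i * (v i - m) ^ 2 + (2 * (m - c)) * (s i * (v i - m)) + (m - c) ^ 2 * s i := by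
        intro i; ring
      simp_rw [key]
      rw [Finset.sum_add_distrib, Finset.sum_add_distrib, ← Finset.mul_sum, ← Finset.mul_sum,
        hw0, hs1]
      ring
    have hsum_c : ∑ i, s i * (v i - c) ^ 2 ≤ D := by
      calc ∑ i, s i * (v i - c) ^ 2 ≤ ∑ i, s i * D :=
            Finset.sum_le_sum fun i _ => mul_le_mul_of_nonneg_left (hptw i) (hs0 i)
        _ = D := by rw [← Finset.sum_mul, hs1, one_mul]
    have hpair : v iM ^ 2 + v im ^ 2 ≤ ∑ i, v i ^ 2 := by
      have hsub : ({iM, im} : Finset (Fin K)) ⊆ Finset.univ := Finset.subset_univ _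
      have := Finset.sum_le_sum_of_subset_of_nonneg hsub
        (fun i _ _ => sq_nonneg (v i))
      rwa [Finset.sum_pair hcase] at this
    have hDle : D ≤ (1 / 2) * ∑ i, v i ^ 2 := by
      rw [hD]; nlinarith [sq_nonneg (v iM + v im)]
    nlinarith [sq_nonneg (m - c)]

lemma sm_key {K : ℕ} (hK : 2 ≤ K) (s v : Fin K → ℝ) (hs0 : ∀ i, 0 ≤ s i)
    (hs1 : ∑ i, s i = 1) :
    ∑ i, (s i * (v i - ∑ j, s j * v j)) ^ 2 ≤ ((K - 1 : ℝ) / K) ^ 2 * ∑ i, v i ^ 2 := by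
  have h2K : (2 : ℝ) ≤ K := by exact_mod_cast hK
  have hKpos : (0 : ℝ) < K := by linarith
  have hc : (1 / 2 : ℝ) ≤ (K - 1) / K := by rw [le_div_iff₀ hKpos]; linarith
  set m := ∑ j, s j * v j with hm
  have hw0 : ∑ i, s i * (v i - m) = 0 := by
    have : ∀ i, s i * (v i - m) = s i * v i - m * s i := fun i => by ring
    simp_rw [this]
    rw [Finset.sum_sub_distrib, ← Finset.mul_sum, hs1, ← hm]; ring
  have h1 : ∑ i, (s i * (v i - m)) ^ 2 ≤ (1 / 2) * ∑ i, s i * (v i - m) ^ 2 :=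
    sm_stepA s (fun i => v i - m) hs0 hs1 hw0
  have h2 : ∑ i, s i * (v i - m) ^ 2 ≤ (1 / 2) * ∑ i, v i ^ 2 :=
    sm_var_le hK s v hs0 hs1
  have hRHSnn : 0 ≤ ∑ i, v i ^ 2 := Finset.sum_nonneg fun i _ => sq_nonneg _
  have hc2 : (1 / 4 : ℝ) ≤ ((K - 1) / K) ^ 2 := by nlinarith
  nlinarith [mul_nonneg (by linarith : (0:ℝ) ≤ ((K - 1) / K) ^ 2 - 1 / 4) hRHSnn]

/-- The linear functional `v ↦ ∑ j, s j * v j`. -/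
noncomputable def smL {K : ℕ} (s : Fin K → ℝ) : (Fin K → ℝ) →L[ℝ] ℝ :=
  ∑ j, s j • ContinuousLinearMap.proj j

/-- The softmax Jacobian as a continuous linear map on the plain pi type. -/
noncomputable def smJ {K : ℕ} (s : Fin K → ℝ) : (Fin K → ℝ) →L[ℝ] (Fin K → ℝ) :=
  ContinuousLinearMap.pi fun i => s i • (ContinuousLinearMap.proj i - smL s)

lemma smJ_apply {K : ℕ} (s : Fin K → ℝ) (v : Fin K → ℝ) (i : Fin K) :
    smJ s v i = s i * (v i - ∑ j, s j * v j) := by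
  simp [smJ, smL]

lemma sm_hasFDerivAt {K : ℕ} (hK : 0 < K) (u : Fin K → ℝ) :
    HasFDerivAt (fun u : Fin K → ℝ => fun i => Real.exp (u i) / ∑ j, Real.exp (u j))
      (smJ fun i => Real.exp (u i) / ∑ j, Real.exp (u j)) u := by
  have : Nonempty (Fin K) := ⟨⟨0, hK⟩⟩
  have hS : 0 < ∑ j, Real.exp (u j) :=
    Finset.sum_pos (fun j _ => Real.exp_pos _) Finset.univ_nonempty
  rw [hasFDerivAt_pi']
  intro i
  have hnum : HasFDerivAt (fun u : Fin K → ℝ => Real.exp (u i))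
      (Real.exp (u i) • ContinuousLinearMap.proj i) u :=
    (hasFDerivAt_apply i u).exp
  have hden : HasFDerivAt (fun u : Fin K → ℝ => ∑ j, Real.exp (u j))
      (∑ j, Real.exp (u j) • ContinuousLinearMap.proj j) u :=
    HasFDerivAt.fun_sum fun j _ =>
      (hasFDerivAt_apply j u).exp
  have hinv : HasFDerivAt (fun u : Fin K → ℝ => (∑ j, Real.exp (u j))⁻¹)
      ((-((∑ j, Real.exp (u j)) ^ 2)⁻¹) • ∑ j, Real.exp (u j) • ContinuousLinearMap.proj j) u :=
    (hasDerivAt_inv (ne_of_gt hS)).comp_hasFDerivAt u hden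
  have hmul := hnum.fun_mul hinv
  have heq : (fun u : Fin K → ℝ => Real.exp (u i) * (∑ j, Real.exp (u j))⁻¹) =
      fun u : Fin K → ℝ => Real.exp (u i) / ∑ j, Real.exp (u j) := by
    funext u; rw [div_eq_mul_inv]
  rw [heq] at hmul
  refine hmul.congr_fderiv ?_
  apply ContinuousLinearMap.ext; intro v
  simp only [ContinuousLinearMap.comp_apply, ContinuousLinearMap.proj_apply,
    ContinuousLinearMap.add_apply, ContinuousLinearMap.smul_apply,
    ContinuousLinearMap.sum_apply, smJ_apply, ContinuousLinearMap.pi_apply,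
    smul_eq_mul]
  have hsum1 : ∑ j, (Real.exp (u j) / ∑ k, Real.exp (u k)) * v j =
      (∑ j, Real.exp (u j) * v j) / ∑ k, Real.exp (u k) := by
    rw [Finset.sum_div]
    exact Finset.sum_congr rfl fun j _ => by ring
  rw [hsum1]
  have hS' : (∑ j, Real.exp (u j)) ≠ 0 := ne_of_gt hS
  field_simp
  ring

/-- The softmax Jacobian as a continuous linear map on Euclidean space. -/
noncomputable def smJE {K : ℕ} (s : Fin K → ℝ) :
    EuclideanSpace ℝ (Fin K) →L[ℝ] EuclideanSpace ℝ (Fin K) :=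
  ((PiLp.continuousLinearEquiv 2 ℝ (fun _ : Fin K => ℝ)).symm.toContinuousLinearMap).comp
    ((smJ s).comp (PiLp.continuousLinearEquiv 2 ℝ (fun _ : Fin K => ℝ)).toContinuousLinearMap)

lemma smJE_apply {K : ℕ} (s : Fin K → ℝ) (v : EuclideanSpace ℝ (Fin K)) (i : Fin K) :
    smJE s v i = s i * (v i - ∑ j, s j * v j) :=
  smJ_apply s v i

lemma sm_hasFDerivAt_E {K : ℕ} (hK : 0 < K) (u : EuclideanSpace ℝ (Fin K)) :
    HasFDerivAt softmax (smJE (fun i => Real.exp (u i) / ∑ j, Real.exp (u j))) u := by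
  have h := sm_hasFDerivAt hK ((PiLp.continuousLinearEquiv 2 ℝ (fun _ : Fin K => ℝ)) u)
  exact ((PiLp.continuousLinearEquiv 2 ℝ (fun _ : Fin K => ℝ)).symm.hasFDerivAt.comp u
    (h.comp u (PiLp.continuousLinearEquiv 2 ℝ (fun _ : Fin K => ℝ)).hasFDerivAt))

lemma smJE_norm_le {K : ℕ} (hK : 2 ≤ K) (s : Fin K → ℝ) (hs0 : ∀ i, 0 ≤ s i)
    (hs1 : ∑ i, s i = 1) : ‖smJE s‖ ≤ (K - 1 : ℝ) / K := by
  have h2K : (2 : ℝ) ≤ K := by exact_mod_cast hK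
  have hKpos : (0 : ℝ) < K := by linarith
  have hcnn : (0 : ℝ) ≤ (K - 1) / K := div_nonneg (by linarith) (by linarith)
  refine ContinuousLinearMap.opNorm_le_bound _ hcnn fun v => ?_
  rw [EuclideanSpace.norm_eq, EuclideanSpace.norm_eq]
  have h1 : ∑ i, ‖smJE s v i‖ ^ 2 = ∑ i, (s i * (v i - ∑ j, s j * v j)) ^ 2 :=
    Finset.sum_congr rfl fun i _ => by rw [smJE_apply, Real.norm_eq_abs, sq_abs]
  have h2 : ∑ i, ‖v i‖ ^ 2 = ∑ i, (v i : ℝ) ^ 2 :=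
    Finset.sum_congr rfl fun i _ => by rw [Real.norm_eq_abs, sq_abs]
  rw [h1, h2]
  calc Real.sqrt (∑ i, (s i * (v i - ∑ j, s j * v j)) ^ 2)
      ≤ Real.sqrt (((K - 1 : ℝ) / K) ^ 2 * ∑ i, (v i : ℝ) ^ 2) :=
        Real.sqrt_le_sqrt (sm_key hK s v hs0 hs1)
    _ = ((K - 1 : ℝ) / K) * Real.sqrt (∑ i, (v i : ℝ) ^ 2) := by
        rw [Real.sqrt_mul (sq_nonneg _), Real.sqrt_sq hcnn]

/-- **Lipschitz constant of the softmax function.**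
For `K ≥ 2`, softmax on `ℝ^K` is Lipschitz with respect to the Euclidean norm
with constant at most `(K-1)/K`. -/
theorem softmax_lipschitz (K : ℕ) (hK : 2 ≤ K) (x y : EuclideanSpace ℝ (Fin K)) :
    ‖softmax x - softmax y‖ ≤ ((K - 1 : ℝ) / K) * ‖x - y‖ := by
  have hK0 : 0 < K := by omega
  have : Nonempty (Fin K) := ⟨⟨0, hK0⟩⟩
  have hder : ∀ z : EuclideanSpace ℝ (Fin K),
      HasFDerivAt softmax (smJE (fun i => Real.exp (z i) / ∑ j, Real.exp (z j))) z :=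
    fun z => sm_hasFDerivAt_E hK0 z
  have hbound : ∀ z : EuclideanSpace ℝ (Fin K),
      ‖smJE (fun i => Real.exp (z i) / ∑ j, Real.exp (z j))‖ ≤ (K - 1 : ℝ) / K := by
    intro z
    have hS : 0 < ∑ j, Real.exp (z j) :=
      Finset.sum_pos (fun j _ => Real.exp_pos _) Finset.univ_nonempty
    refine smJE_norm_le hK _ (fun i => ?_) ?_
    · exact div_nonneg (Real.exp_pos _).le hS.le
    · rw [← Finset.sum_div, div_self (ne_of_gt hS)]
  exact Convex.norm_image_sub_le_of_norm_hasFDerivWithin_le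
    (fun z _ => (hder z).hasFDerivWithinAt) (fun z _ => hbound z) convex_univ
    (Set.mem_univ y) (Set.mem_univ x)
end

section
/- Let K ∈ ℕ with K ≥ 1 and let p ∈ P^K be a vector in the probability simplex. Then the K × K matrix M(p) := diag(p) − p pᵀ (whose (i,j) entry is p_i(1 − p_i) if i = j and −p_i p_j if i ≠ j) is symmetric positive semidefinite, and its spectral norm satisfies ‖M(p)‖₂ ≤ 1 − 1/K. -/
open Matrix

section Aux

variable {K : ℕ}

/-- The quadratic form of `diag p - p pᵀ` as a variance expression. -/
lemma softmax_qform (p x : Fin K → ℝ) :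
    x ⬝ᵥ ((Matrix.diagonal p - Matrix.vecMulVec p p) *ᵥ x)
      = (∑ i, p i * x i ^ 2) - (∑ i, p i * x i) ^ 2 := by
  rw [Matrix.sub_mulVec, dotProduct_sub]
  congr 1
  · simp only [dotProduct, Matrix.mulVec_diagonal]
    exact Finset.sum_congr rfl fun i _ => by ring
  · simp only [dotProduct, Matrix.mulVec, Matrix.vecMulVec_apply, sq,
      Finset.mul_sum, Finset.sum_mul]
    refine Finset.sum_congr rfl fun i _ => Finset.sum_congr rfl fun j _ => by ring

lemma softmax_qform_nonneg (p x : Fin K → ℝ) (hp0 : ∀ i, 0 ≤ p i)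
    (hp1 : ∑ i, p i = 1) :
    0 ≤ (∑ i, p i * x i ^ 2) - (∑ i, p i * x i) ^ 2 := by
  have h := Finset.sum_mul_sq_le_sq_mul_sq Finset.univ
    (fun i => Real.sqrt (p i)) (fun i => Real.sqrt (p i) * x i)
  have e1 : ∀ i : Fin K, Real.sqrt (p i) * (Real.sqrt (p i) * x i) = p i * x i := by
    intro i
    rw [← mul_assoc, Real.mul_self_sqrt (hp0 i)]
  have e2 : ∀ i : Fin K, Real.sqrt (p i) ^ 2 = p i := fun i => Real.sq_sqrt (hp0 i)
  have e3 : ∀ i : Fin K, (Real.sqrt (p i) * x i) ^ 2 = p i * x i ^ 2 := by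
    intro i
    rw [mul_pow, e2]
  simp only [e1, e2, e3] at h
  rw [hp1, one_mul] at h
  linarith

lemma softmax_qform_le (p x : Fin K → ℝ) (hK : 1 ≤ K) (hp0 : ∀ i, 0 ≤ p i)
    (hp1 : ∑ i, p i = 1) :
    (∑ i, p i * x i ^ 2) - (∑ i, p i * x i) ^ 2
      ≤ (1 - 1 / K) * (x ⬝ᵥ x) := by
  set S : ℝ := ∑ i, x i ^ 2 with hS
  have hSnn : 0 ≤ S := Finset.sum_nonneg fun i _ => sq_nonneg _
  set s : ℝ := ∑ i, p i ^ 2 with hs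
  -- the double-sum identity
  have hdouble : ∑ i, ∑ j, p i * p j * (x i - x j) ^ 2
      = 2 * ((∑ i, p i * x i ^ 2) - (∑ i, p i * x i) ^ 2) := by
    have inner_eq : ∀ i : Fin K, ∑ j, p i * p j * (x i - x j) ^ 2
        = p i * x i ^ 2 * (∑ j, p j) + p i * (∑ j, p j * x j ^ 2)
          - 2 * (p i * x i) * (∑ j, p j * x j) := by
      intro i
      rw [Finset.mul_sum, Finset.mul_sum, Finset.mul_sum, ← Finset.sum_add_distrib,
        ← Finset.sum_sub_distrib]
      exact Finset.sum_congr rfl fun j _ => by ring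
    rw [Finset.sum_congr rfl fun i _ => inner_eq i]
    rw [Finset.sum_sub_distrib, Finset.sum_add_distrib, hp1]
    have e : ∑ i, 2 * (p i * x i) * (∑ j, p j * x j)
        = 2 * ((∑ i, p i * x i) * (∑ j, p j * x j)) := by
      rw [← Finset.sum_mul, ← Finset.mul_sum, mul_assoc]
    have e2 : ∑ i, p i * (∑ j, p j * x j ^ 2) = ∑ j, p j * x j ^ 2 := by
      rw [← Finset.sum_mul, hp1, one_mul]
    rw [e, e2]
    ring
  -- pointwise bound
  have hpt : ∀ i j : Fin K, p i * p j * (x i - x j) ^ 2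
      ≤ p i * p j * (2 * S) - (if i = j then p i * p j * (2 * S) else 0) := by
    intro i j
    by_cases hij : i = j
    · subst hij
      simp
    · simp only [hij, if_false, sub_zero]
      have hxx : x i ^ 2 + x j ^ 2 ≤ S := by
        have : ∑ k ∈ ({i, j} : Finset (Fin K)), x k ^ 2 ≤ S := by
          apply Finset.sum_le_sum_of_subset_of_nonneg (Finset.subset_univ _)
          intro k _ _
          exact sq_nonneg _
        rwa [Finset.sum_pair hij] at this
      have hpp : 0 ≤ p i * p j := mul_nonneg (hp0 i) (hp0 j)
      nlinarith [sq_nonneg (x i + x j)]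
  -- sum the pointwise bound
  have hsum : ∑ i, ∑ j, p i * p j * (x i - x j) ^ 2 ≤ 2 * S * (1 - s) := by
    calc ∑ i, ∑ j, p i * p j * (x i - x j) ^ 2
        ≤ ∑ i, ∑ j, (p i * p j * (2 * S) - (if i = j then p i * p j * (2 * S) else 0)) :=
          Finset.sum_le_sum fun i _ => Finset.sum_le_sum fun j _ => hpt i j
      _ = 2 * S * (1 - s) := by
          simp only [Finset.sum_sub_distrib]
          have h1 : ∀ i : Fin K, ∑ j, p i * p j * (2 * S) = p i * (2 * S) := by
            intro i
            rw [← Finset.sum_mul, ← Finset.mul_sum, hp1, mul_one]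
          have h2 : ∀ i : Fin K, ∑ j, (if i = j then p i * p j * (2 * S) else 0)
              = p i ^ 2 * (2 * S) := by
            intro i
            rw [Finset.sum_ite_eq Finset.univ i (fun j => p i * p j * (2 * S))]
            simp [sq]
          rw [Finset.sum_congr rfl fun i _ => h1 i, Finset.sum_congr rfl fun i _ => h2 i,
            ← Finset.sum_mul, ← Finset.sum_mul, hp1]
          ring
  -- s ≥ 1/K
  have hsK : (1 : ℝ) / K ≤ s := by
    have h := Finset.sum_mul_sq_le_sq_mul_sq Finset.univ (fun _ : Fin K => (1 : ℝ)) p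
    simp only [one_mul, one_pow] at h
    rw [hp1, Finset.sum_const, Finset.card_univ, Fintype.card_fin, nsmul_eq_mul, mul_one] at h
    have hKpos : (0 : ℝ) < K := by
      exact_mod_cast Nat.lt_of_lt_of_le Nat.zero_lt_one hK
    rw [div_le_iff₀ hKpos]
    rw [← hs] at h
    norm_num at h
    linarith [mul_comm (K : ℝ) s]
  -- conclude
  have hdot : x ⬝ᵥ x = S := by
    simp only [dotProduct, hS, sq]
  rw [hdot]
  have : 2 * ((∑ i, p i * x i ^ 2) - (∑ i, p i * x i) ^ 2) ≤ 2 * S * (1 - s) := by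
    rw [← hdouble]; exact hsum
  nlinarith

open scoped MatrixOrder in
lemma psd_sqrt_exists {n : Type*} [Fintype n] [DecidableEq n] {A : Matrix n n ℝ}
    (hA : A.PosSemidef) : ∃ B : Matrix n n ℝ, B.PosSemidef ∧ B * B = A :=
  ⟨CFC.sqrt A, (CFC.sqrt_nonneg A).posSemidef, CFC.sqrt_mul_sqrt_self A hA.nonneg⟩

end Aux

/-- The spectral norm of a real matrix: the operator norm of the induced linear
map between Euclidean spaces. -/
noncomputable def specNorm {α β : Type*} [Fintype α] [Fintype β] [DecidableEq β]
    (A : Matrix α β ℝ) : ℝ :=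
  ‖LinearMap.toContinuousLinearMap (Matrix.toEuclideanLin A)‖

/-- **The softmax Jacobian `diag(p) - p pᵀ` at a simplex point `p`.**
It is symmetric, positive semidefinite, and its spectral norm is at most `1 - 1/K`. -/
theorem softmax_jacobian_psd_and_norm_bound
    (K : ℕ) (hK : 1 ≤ K) (p : Fin K → ℝ) (hp : p ∈ stdSimplex ℝ (Fin K)) :
    (Matrix.diagonal p - Matrix.vecMulVec p p)ᵀ
        = Matrix.diagonal p - Matrix.vecMulVec p p ∧
    (Matrix.diagonal p - Matrix.vecMulVec p p).PosSemidef ∧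
    specNorm (Matrix.diagonal p - Matrix.vecMulVec p p) ≤ 1 - 1 / K := by
  obtain ⟨hp0, hp1⟩ := hp
  set M : Matrix (Fin K) (Fin K) ℝ := Matrix.diagonal p - Matrix.vecMulVec p p with hM
  -- symmetry
  have hsymm : Mᵀ = M := by
    rw [hM, Matrix.transpose_sub, Matrix.diagonal_transpose]
    congr 1
    ext i j
    simp [Matrix.vecMulVec_apply, mul_comm]
  -- quadratic form bounds
  have hq0 : ∀ x : Fin K → ℝ, 0 ≤ x ⬝ᵥ (M *ᵥ x) := by
    intro x
    rw [hM, softmax_qform]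
    exact softmax_qform_nonneg p x hp0 hp1
  have hqle : ∀ x : Fin K → ℝ, x ⬝ᵥ (M *ᵥ x) ≤ (1 - 1 / K) * (x ⬝ᵥ x) := by
    intro x
    rw [hM, softmax_qform]
    exact softmax_qform_le p x hK hp0 hp1
  -- PSD
  have hPSD : M.PosSemidef := by
    refine PosSemidef.of_dotProduct_mulVec_nonneg ?_ ?_
    · rw [Matrix.IsHermitian, Matrix.conjTranspose_eq_transpose_of_trivial]
      simpa using hsymm
    · intro x
      simpa using hq0 x
  refine ⟨hsymm, hPSD, ?_⟩
  -- the norm bound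
  set c : ℝ := 1 - 1 / K with hc
  have hc0 : 0 ≤ c := by
    have hK1 : (1 : ℝ) ≤ K := by exact_mod_cast hK
    have h2 : 1 / (K : ℝ) ≤ 1 := by
      rw [div_le_one (by linarith)]; exact hK1
    rw [hc]
    linarith
  -- square root of M
  obtain ⟨B, hBPSD, hBB⟩ := psd_sqrt_exists hPSD
  have hBsymm : Bᵀ = B := by
    have := hBPSD.isHermitian
    rw [Matrix.IsHermitian, Matrix.conjTranspose_eq_transpose_of_trivial] at this
    simpa using this
  -- ‖B u‖² = u M u
  have hBnorm : ∀ u : Fin K → ℝ, (B *ᵥ u) ⬝ᵥ (B *ᵥ u) = u ⬝ᵥ (M *ᵥ u) := by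
    intro u
    symm
    conv_lhs => rw [← hBB]
    rw [← Matrix.mulVec_mulVec, Matrix.dotProduct_mulVec, ← hBsymm,
      Matrix.vecMul_transpose, hBsymm]
  -- dot product bound for M *ᵥ x
  have hMx : ∀ x : Fin K → ℝ, (M *ᵥ x) ⬝ᵥ (M *ᵥ x) ≤ c ^ 2 * (x ⬝ᵥ x) := by
    intro x
    have h1 : M *ᵥ x = B *ᵥ (B *ᵥ x) := by
      rw [Matrix.mulVec_mulVec, hBB]
    calc (M *ᵥ x) ⬝ᵥ (M *ᵥ x) = (B *ᵥ x) ⬝ᵥ (M *ᵥ (B *ᵥ x)) := by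
          rw [h1, hBnorm]
      _ ≤ c * ((B *ᵥ x) ⬝ᵥ (B *ᵥ x)) := hqle _
      _ = c * (x ⬝ᵥ (M *ᵥ x)) := by rw [hBnorm]
      _ ≤ c * (c * (x ⬝ᵥ x)) := mul_le_mul_of_nonneg_left (hqle x) hc0
      _ = c ^ 2 * (x ⬝ᵥ x) := by ring
  -- conclude the operator norm bound
  rw [specNorm]
  apply ContinuousLinearMap.opNorm_le_bound _ hc0
  intro x
  have hTx : (LinearMap.toContinuousLinearMap (Matrix.toEuclideanLin M)) x
      = (WithLp.equiv 2 (Fin K → ℝ)).symm (M *ᵥ (WithLp.equiv 2 (Fin K → ℝ)) x) := by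
    simp [Matrix.toEuclideanLin_apply]
  set y : Fin K → ℝ := (WithLp.equiv 2 (Fin K → ℝ)) x with hy
  have hnx : ‖x‖ ^ 2 = y ⬝ᵥ y := by
    rw [EuclideanSpace.norm_eq]
    rw [Real.sq_sqrt (Finset.sum_nonneg fun i _ => sq_nonneg _)]
    simp [dotProduct, sq, hy]
  have hnTx : ‖(LinearMap.toContinuousLinearMap (Matrix.toEuclideanLin M)) x‖ ^ 2
      = (M *ᵥ y) ⬝ᵥ (M *ᵥ y) := by
    rw [hTx, EuclideanSpace.norm_eq]
    rw [Real.sq_sqrt (Finset.sum_nonneg fun i _ => sq_nonneg _)]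
    simp [dotProduct, sq, hy]
  have hb := hMx y
  rw [← hnTx, ← hnx] at hb
  nlinarith [norm_nonneg ((LinearMap.toContinuousLinearMap (Matrix.toEuclideanLin M)) x),
    norm_nonneg x, mul_nonneg hc0 (norm_nonneg x)]
end

section
/- Let N ∈ ℕ, let K₁, …, K_{N+1} ∈ ℕ be positive, let b ∈ ℝ^{K₁}, let A_n ∈ ℝ^{K_{n+1} × K_n} for n = 1, …, N with the convention A_{N+1} := 0, and let ε₁, …, ε_{N+1} > 0. Define L on P^{K₁} × ⋯ × P^{K_{N+1}} by L(γ₁, …, γ_{N+1}) = ⟨b, γ₁⟩ + Σ_{n=1}^N ⟨γ_{n+1}, A_n γ_n⟩ + Σ_{n=1}^{N+1} ε_n Σ_{k=1}^{K_n} {γ_n}_k log {γ_n}_k (with 0 · log 0 := 0). If min{ε_n : n = 1, …, N+1} > max{‖A_n‖₂ + ‖A_{n+1}‖₂ : n = 1, …, N}, then L is strictly convex on the product of simplices, and consequently L has at most one global minimizer there. -/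
open Finset

/-- The `Γ`-subproblem objective of the EON model for a single data instance:
`L(γ₁,…,γ_{N+1}) = ⟨b, γ₁⟩ + ∑_{n=1}^N ⟨γ_{n+1}, A_n γ_n⟩
  + ∑_{n=1}^{N+1} ε_n ∑_k γ_{n,k} log γ_{n,k}`
(blocks indexed by `Fin (N+1)`, block `n` standing for `γ_{n+1}`; `Real.log 0 = 0`
implements the convention `0 · log 0 = 0`). -/
noncomputable def gammaObj (N : ℕ) (K : Fin (N + 1) → ℕ) (b : Fin (K 0) → ℝ)
    (A : ∀ n : Fin N, Matrix (Fin (K n.succ)) (Fin (K n.castSucc)) ℝ)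
    (ε : Fin (N + 1) → ℝ) (γ : ∀ n : Fin (N + 1), Fin (K n) → ℝ) : ℝ :=
  (∑ k, b k * γ 0 k)
    + (∑ n : Fin N, ∑ j, ∑ k, γ n.succ j * A n j k * γ n.castSucc k)
    + ∑ n : Fin (N + 1), ε n * ∑ k, γ n k * Real.log (γ n k)

/-- `x log x - x²/2` is convex on `[0,1]`. -/
lemma auxEON_g_convex : ConvexOn ℝ (Set.Icc (0:ℝ) 1)
    (fun x => x * Real.log x - x ^ 2 / 2) := by
  have hD : Convex ℝ (Set.Icc (0:ℝ) 1) := convex_Icc 0 1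
  refine convexOn_of_hasDerivWithinAt2_nonneg hD
    (f' := fun x => Real.log x + 1 - x) (f'' := fun x => x⁻¹ - 1) ?_ ?_ ?_ ?_
  · exact (Real.continuous_mul_log.sub (by continuity)).continuousOn
  · intro x hx
    rw [interior_Icc] at hx
    have hx0 : x ≠ 0 := ne_of_gt hx.1
    have h2 : HasDerivAt (fun y : ℝ => y ^ 2 / 2) x x := by
      simpa using (hasDerivAt_pow 2 x).div_const 2
    exact ((Real.hasDerivAt_mul_log hx0).sub h2).hasDerivWithinAt
  · intro x hx
    rw [interior_Icc] at hx
    have hx0 : x ≠ 0 := ne_of_gt hx.1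
    have h1 : HasDerivAt (fun y : ℝ => Real.log y + 1 - y) (x⁻¹ - 1) x := by
      exact ((Real.hasDerivAt_log hx0).add_const 1).sub (hasDerivAt_id' x)
    exact h1.hasDerivWithinAt
  · intro x hx
    rw [interior_Icc] at hx
    have h1 : (1:ℝ) ≤ x⁻¹ := by
      rw [le_inv_comm₀ one_pos hx.1]
      simpa using hx.2.le
    linarith

/-- Pointwise quantified strong convexity of `x log x` on `[0,1]`. -/
lemma auxEON_entropy_pt {u v a c : ℝ} (hu0 : 0 ≤ u) (hu1 : u ≤ 1) (hv0 : 0 ≤ v)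
    (hv1 : v ≤ 1) (ha : 0 ≤ a) (hc : 0 ≤ c) (hac : a + c = 1) :
    (a * u + c * v) * Real.log (a * u + c * v)
      ≤ a * (u * Real.log u) + c * (v * Real.log v) - a * c * (u - v) ^ 2 / 2 := by
  have h := auxEON_g_convex.2 (Set.mem_Icc.mpr ⟨hu0, hu1⟩) (Set.mem_Icc.mpr ⟨hv0, hv1⟩)
    ha hc hac
  simp only [smul_eq_mul] at h
  have hc' : c = 1 - a := by linarith
  subst hc'
  nlinarith [h]

lemma auxEON_specNorm_nonneg {α β : Type*} [Fintype α] [Fintype β] [DecidableEq β]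
    (A : Matrix α β ℝ) : 0 ≤ specNorm A := norm_nonneg _

lemma auxEON_bilin_le {J K' : Type*} [Fintype J] [Fintype K'] [DecidableEq K']
    (M : Matrix J K' ℝ) (u : J → ℝ) (v : K' → ℝ) :
    |∑ j, ∑ k, u j * M j k * v k|
      ≤ specNorm M * (Real.sqrt (∑ j, (u j) ^ 2) * Real.sqrt (∑ k, (v k) ^ 2)) := by
  set u' : EuclideanSpace ℝ J := (WithLp.equiv 2 (J → ℝ)).symm u with hu'
  set v' : EuclideanSpace ℝ K' := (WithLp.equiv 2 (K' → ℝ)).symm v with hv'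
  have hinner : (inner ℝ u' (Matrix.toEuclideanLin M v') : ℝ)
      = ∑ j, ∑ k, u j * M j k * v k := by
    rw [hv', WithLp.equiv_symm_apply, Matrix.toEuclideanLin_toLp]
    simp only [PiLp.inner_apply, RCLike.inner_apply, conj_trivial, hu',
      WithLp.equiv_symm_apply, PiLp.toLp_apply, Matrix.toLin'_apply, Matrix.mulVec,
      dotProduct, Finset.mul_sum, Finset.sum_mul]
    exact Finset.sum_congr rfl fun j _ => Finset.sum_congr rfl fun k _ => by ring
  have h1 : |(inner ℝ u' (Matrix.toEuclideanLin M v') : ℝ)|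
      ≤ ‖u'‖ * ‖Matrix.toEuclideanLin M v'‖ := abs_real_inner_le_norm _ _
  have h2 : ‖Matrix.toEuclideanLin M v'‖ ≤ specNorm M * ‖v'‖ := by
    have := (LinearMap.toContinuousLinearMap (Matrix.toEuclideanLin M)).le_opNorm v'
    simpa [specNorm] using this
  have hnu : ‖u'‖ = Real.sqrt (∑ j, (u j) ^ 2) := by
    rw [EuclideanSpace.norm_eq]
    congr 1
    exact Finset.sum_congr rfl fun j _ => by
      simp [hu', WithLp.equiv_symm_apply, sq_abs]
  have hnv : ‖v'‖ = Real.sqrt (∑ k, (v k) ^ 2) := by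
    rw [EuclideanSpace.norm_eq]
    congr 1
    exact Finset.sum_congr rfl fun k _ => by
      simp [hv', WithLp.equiv_symm_apply, sq_abs]
  calc |∑ j, ∑ k, u j * M j k * v k| = |(inner ℝ u' (Matrix.toEuclideanLin M v') : ℝ)| := by
        rw [hinner]
    _ ≤ ‖u'‖ * ‖Matrix.toEuclideanLin M v'‖ := h1
    _ ≤ ‖u'‖ * (specNorm M * ‖v'‖) := mul_le_mul_of_nonneg_left h2 (norm_nonneg _)
    _ = specNorm M * (Real.sqrt (∑ j, (u j) ^ 2) * Real.sqrt (∑ k, (v k) ^ 2)) := by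
        rw [hnu, hnv]; ring

/-- coefficient picked up by block `m` as the "right" factor (`castSucc`). -/
noncomputable def auxEON_sucCoef {N : ℕ} (a : Fin N → ℝ) (m : Fin (N + 1)) : ℝ :=
  if h : (m : ℕ) < N then a ⟨(m : ℕ), h⟩ else 0

/-- coefficient picked up by block `m` as the "left" factor (`succ`). -/
noncomputable def auxEON_predCoef {N : ℕ} (a : Fin N → ℝ) (m : Fin (N + 1)) : ℝ :=
  if h : 0 < (m : ℕ) then a ⟨(m : ℕ) - 1, by have := m.isLt; omega⟩ else 0

lemma auxEON_sum_castSucc {N : ℕ} (a : Fin N → ℝ) (x : Fin (N + 1) → ℝ) :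
    ∑ n : Fin N, a n * x n.castSucc = ∑ m : Fin (N + 1), auxEON_sucCoef a m * x m := by
  rw [Fin.sum_univ_castSucc]
  simp [auxEON_sucCoef]

lemma auxEON_sum_succ {N : ℕ} (a : Fin N → ℝ) (x : Fin (N + 1) → ℝ) :
    ∑ n : Fin N, a n * x n.succ = ∑ m : Fin (N + 1), auxEON_predCoef a m * x m := by
  rw [Fin.sum_univ_succ]
  simp [auxEON_predCoef]

lemma auxEON_coeff_lt {N : ℕ} (a : Fin N → ℝ) (ha : ∀ n, 0 ≤ a n) {e : ℝ} (he : 0 < e)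
    (hc : ∀ n : Fin N, a n + (if h : (n : ℕ) + 1 < N then a ⟨(n : ℕ) + 1, h⟩ else 0) < e)
    (m : Fin (N + 1)) :
    auxEON_predCoef a m + auxEON_sucCoef a m < e := by
  unfold auxEON_predCoef auxEON_sucCoef
  have hm := m.isLt
  split_ifs with h1 h2 h2
  · set n : Fin N := ⟨(m : ℕ) - 1, by omega⟩ with hn
    have key := hc n
    have hcnd : (n : ℕ) + 1 < N := by simp [hn]; omega
    rw [dif_pos hcnd] at key
    have : (⟨(n : ℕ) + 1, hcnd⟩ : Fin N) = ⟨(m : ℕ), h2⟩ := by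
      apply Fin.ext; simp [hn]; omega
    rw [this] at key
    exact key
  · set n : Fin N := ⟨(m : ℕ) - 1, by omega⟩ with hn
    have key := hc n
    have hcnd : ¬ ((n : ℕ) + 1 < N) := by simp [hn]; omega
    rw [dif_neg hcnd] at key
    linarith
  · have key := hc ⟨(m : ℕ), h2⟩
    have hnn : 0 ≤ (if h : ((⟨(m : ℕ), h2⟩ : Fin N) : ℕ) + 1 < N
        then a ⟨((⟨(m : ℕ), h2⟩ : Fin N) : ℕ) + 1, h⟩ else 0) := by
      split_ifs
      · exact ha _
      · exact le_rfl
    linarith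
  · linarith

lemma auxEON_sqrt_amgm {x y : ℝ} (hx : 0 ≤ x) (hy : 0 ≤ y) :
    Real.sqrt x * Real.sqrt y ≤ (x + y) / 2 := by
  nlinarith [sq_nonneg (Real.sqrt x - Real.sqrt y), Real.sq_sqrt hx, Real.sq_sqrt hy,
    Real.sqrt_nonneg x, Real.sqrt_nonneg y]

/-- **Sufficient condition for strict convexity of the `Γ`-problem.** -/
theorem gamma_problem_strictly_convex_unique
    (N : ℕ) (K : Fin (N + 1) → ℕ) (hK : ∀ n, 0 < K n)
    (b : Fin (K 0) → ℝ)
    (A : ∀ n : Fin N, Matrix (Fin (K n.succ)) (Fin (K n.castSucc)) ℝ)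
    (ε : Fin (N + 1) → ℝ) (hε : ∀ n, 0 < ε n)
    (hcond : ∀ i : Fin (N + 1), ∀ n : Fin N,
      specNorm (A n) + (if h : (n : ℕ) + 1 < N then specNorm (A ⟨(n : ℕ) + 1, h⟩) else 0)
        < ε i) :
    StrictConvexOn ℝ
        {γ : ∀ n : Fin (N + 1), Fin (K n) → ℝ |
          ∀ n, γ n ∈ stdSimplex ℝ (Fin (K n))}
        (gammaObj N K b A ε) ∧
    ∀ γ σ : ∀ n : Fin (N + 1), Fin (K n) → ℝ,
      (∀ n, γ n ∈ stdSimplex ℝ (Fin (K n))) →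
      (∀ n, σ n ∈ stdSimplex ℝ (Fin (K n))) →
      (∀ τ : ∀ n : Fin (N + 1), Fin (K n) → ℝ,
        (∀ n, τ n ∈ stdSimplex ℝ (Fin (K n))) →
        gammaObj N K b A ε γ ≤ gammaObj N K b A ε τ) →
      (∀ τ : ∀ n : Fin (N + 1), Fin (K n) → ℝ,
        (∀ n, τ n ∈ stdSimplex ℝ (Fin (K n))) →
        gammaObj N K b A ε σ ≤ gammaObj N K b A ε τ) →
      γ = σ := by
  classical
  have hconv : Convex ℝ {γ : ∀ n : Fin (N + 1), Fin (K n) → ℝ |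
      ∀ n, γ n ∈ stdSimplex ℝ (Fin (K n))} := by
    have h1 : {γ : ∀ n : Fin (N + 1), Fin (K n) → ℝ | ∀ n, γ n ∈ stdSimplex ℝ (Fin (K n))}
        = Set.univ.pi (fun n => stdSimplex ℝ (Fin (K n))) := by
      ext γ; simp [Set.mem_pi]
    rw [h1]
    exact convex_pi fun n _ => convex_stdSimplex ℝ _
  -- coordinates of simplex elements lie in [0,1]
  have hcoord : ∀ (τ : ∀ n : Fin (N + 1), Fin (K n) → ℝ),
      (∀ n, τ n ∈ stdSimplex ℝ (Fin (K n))) → ∀ m k, 0 ≤ τ m k ∧ τ m k ≤ 1 := by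
    intro τ hτ m k
    obtain ⟨hnn, hsum⟩ := hτ m
    refine ⟨hnn k, ?_⟩
    calc τ m k ≤ ∑ i, τ m i := Finset.single_le_sum (fun i _ => hnn i) (Finset.mem_univ k)
      _ = 1 := hsum
  have SC : StrictConvexOn ℝ
      {γ : ∀ n : Fin (N + 1), Fin (K n) → ℝ | ∀ n, γ n ∈ stdSimplex ℝ (Fin (K n))}
      (gammaObj N K b A ε) := by
    refine ⟨hconv, ?_⟩
    intro γ hγ σ hσ hne aa cc ha hc hac
    set Sq : Fin (N + 1) → ℝ := fun m => ∑ k, (γ m k - σ m k) ^ 2 with hSq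
    have hSqnn : ∀ m, 0 ≤ Sq m := fun m => Finset.sum_nonneg fun k _ => sq_nonneg _
    have hex : ∃ m, 0 < Sq m := by
      by_contra hno
      push_neg at hno
      apply hne
      funext m k
      have h0 : Sq m = 0 := le_antisymm (hno m) (hSqnn m)
      rw [hSq] at h0
      have h1 := (Finset.sum_eq_zero_iff_of_nonneg
        (fun i (_ : i ∈ Finset.univ) => sq_nonneg (γ m i - σ m i))).mp h0 k (Finset.mem_univ k)
      have h2 : γ m k - σ m k = 0 := by
        have := sq_eq_zero_iff.mp h1
        exact this
      linarith
    -- the bilinear "difference" sum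
    set B : ℝ := ∑ n : Fin N, ∑ j, ∑ k,
      (γ n.succ j - σ n.succ j) * A n j k * (γ n.castSucc k - σ n.castSucc k) with hB
    -- bound on |B|
    have hBn : ∀ n : Fin N, |∑ j, ∑ k,
        (γ n.succ j - σ n.succ j) * A n j k * (γ n.castSucc k - σ n.castSucc k)|
        ≤ specNorm (A n) * (Sq n.succ + Sq n.castSucc) / 2 := by
      intro n
      calc |∑ j, ∑ k, (γ n.succ j - σ n.succ j) * A n j k * (γ n.castSucc k - σ n.castSucc k)|
          ≤ specNorm (A n) * (Real.sqrt (∑ j, (γ n.succ j - σ n.succ j) ^ 2)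
              * Real.sqrt (∑ k, (γ n.castSucc k - σ n.castSucc k) ^ 2)) :=
            auxEON_bilin_le (A n) _ _
        _ ≤ specNorm (A n) * ((Sq n.succ + Sq n.castSucc) / 2) := by
            refine mul_le_mul_of_nonneg_left ?_ (auxEON_specNorm_nonneg _)
            exact auxEON_sqrt_amgm (Finset.sum_nonneg fun _ _ => sq_nonneg _)
              (Finset.sum_nonneg fun _ _ => sq_nonneg _)
        _ = specNorm (A n) * (Sq n.succ + Sq n.castSucc) / 2 := by ring
    have hBabs : |B| ≤ (∑ n : Fin N, specNorm (A n) * (Sq n.succ + Sq n.castSucc)) / 2 := by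
      calc |B| ≤ ∑ n : Fin N, |∑ j, ∑ k,
            (γ n.succ j - σ n.succ j) * A n j k * (γ n.castSucc k - σ n.castSucc k)| := by
            rw [hB]; exact Finset.abs_sum_le_sum_abs _ _
        _ ≤ ∑ n : Fin N, specNorm (A n) * (Sq n.succ + Sq n.castSucc) / 2 :=
            Finset.sum_le_sum fun n _ => hBn n
        _ = (∑ n : Fin N, specNorm (A n) * (Sq n.succ + Sq n.castSucc)) / 2 :=
            (Finset.sum_div _ _ _).symm
    -- the key strict comparison
    have hkey : ∑ n : Fin N, specNorm (A n) * (Sq n.succ + Sq n.castSucc)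
        < ∑ m, ε m * Sq m := by
      have lhs_eq : ∑ n : Fin N, specNorm (A n) * (Sq n.succ + Sq n.castSucc)
          = ∑ m, (auxEON_predCoef (fun n => specNorm (A n)) m
              + auxEON_sucCoef (fun n => specNorm (A n)) m) * Sq m := by
        simp only [mul_add, Finset.sum_add_distrib, add_mul]
        rw [auxEON_sum_succ, auxEON_sum_castSucc]
      rw [lhs_eq]
      obtain ⟨m0, hm0⟩ := hex
      refine Finset.sum_lt_sum (fun m _ => ?_) ⟨m0, Finset.mem_univ m0, ?_⟩
      · exact mul_le_mul_of_nonneg_right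
          (auxEON_coeff_lt _ (fun n => auxEON_specNorm_nonneg _) (hε m) (hcond m) m).le
          (hSqnn m)
      · exact mul_lt_mul_of_pos_right
          (auxEON_coeff_lt _ (fun n => auxEON_specNorm_nonneg _) (hε m0) (hcond m0) m0) hm0
    -- expand the objective
    simp only [smul_eq_mul]
    rw [gammaObj, gammaObj, gammaObj]
    simp only [Pi.add_apply, Pi.smul_apply, smul_eq_mul]
    -- linear part
    have hT1 : ∑ k, b k * (aa * γ 0 k + cc * σ 0 k)
        = aa * ∑ k, b k * γ 0 k + cc * ∑ k, b k * σ 0 k := by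
      simp only [Finset.mul_sum, ← Finset.sum_add_distrib]
      exact Finset.sum_congr rfl fun k _ => by ring
    -- quadratic part
    have hT2 : ∑ n : Fin N, ∑ j, ∑ k, (aa * γ n.succ j + cc * σ n.succ j) * A n j k *
          (aa * γ n.castSucc k + cc * σ n.castSucc k)
        = aa * (∑ n : Fin N, ∑ j, ∑ k, γ n.succ j * A n j k * γ n.castSucc k)
          + cc * (∑ n : Fin N, ∑ j, ∑ k, σ n.succ j * A n j k * σ n.castSucc k)
          - aa * cc * B := by
      have hc' : cc = 1 - aa := by linarith
      subst hc'
      rw [hB]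
      simp only [Finset.mul_sum, ← Finset.sum_add_distrib, ← Finset.sum_sub_distrib]
      exact Finset.sum_congr rfl fun n _ => Finset.sum_congr rfl fun j _ =>
        Finset.sum_congr rfl fun k _ => by ring
    -- entropy part
    have hT3 : ∀ m : Fin (N + 1),
        ∑ k, (aa * γ m k + cc * σ m k) * Real.log (aa * γ m k + cc * σ m k)
        ≤ aa * (∑ k, γ m k * Real.log (γ m k)) + cc * (∑ k, σ m k * Real.log (σ m k))
          - aa * cc * Sq m / 2 := by
      intro m
      calc ∑ k, (aa * γ m k + cc * σ m k) * Real.log (aa * γ m k + cc * σ m k)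
          ≤ ∑ k, (aa * (γ m k * Real.log (γ m k)) + cc * (σ m k * Real.log (σ m k))
              - aa * cc * (γ m k - σ m k) ^ 2 / 2) :=
            Finset.sum_le_sum fun k _ => auxEON_entropy_pt (hcoord γ hγ m k).1
              (hcoord γ hγ m k).2 (hcoord σ hσ m k).1 (hcoord σ hσ m k).2 ha.le hc.le hac
        _ = aa * (∑ k, γ m k * Real.log (γ m k)) + cc * (∑ k, σ m k * Real.log (σ m k))
              - aa * cc * Sq m / 2 := by
            rw [hSq]
            simp only [Finset.mul_sum, Finset.sum_div, ← Finset.sum_add_distrib,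
              ← Finset.sum_sub_distrib]
            all_goals exact Finset.sum_congr rfl fun k _ => by ring
    have hT3sum : ∑ m, ε m * ∑ k, (aa * γ m k + cc * σ m k)
          * Real.log (aa * γ m k + cc * σ m k)
        ≤ aa * (∑ m, ε m * ∑ k, γ m k * Real.log (γ m k))
          + cc * (∑ m, ε m * ∑ k, σ m k * Real.log (σ m k))
          - aa * cc / 2 * ∑ m, ε m * Sq m := by
      calc ∑ m, ε m * ∑ k, (aa * γ m k + cc * σ m k) * Real.log (aa * γ m k + cc * σ m k)
          ≤ ∑ m, ε m * (aa * (∑ k, γ m k * Real.log (γ m k))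
              + cc * (∑ k, σ m k * Real.log (σ m k)) - aa * cc * Sq m / 2) :=
            Finset.sum_le_sum fun m _ => mul_le_mul_of_nonneg_left (hT3 m) (hε m).le
        _ = aa * (∑ m, ε m * ∑ k, γ m k * Real.log (γ m k))
              + cc * (∑ m, ε m * ∑ k, σ m k * Real.log (σ m k))
              - aa * cc / 2 * ∑ m, ε m * Sq m := by
            rw [Finset.mul_sum, Finset.mul_sum, Finset.mul_sum,
              ← Finset.sum_add_distrib, ← Finset.sum_sub_distrib]
            exact Finset.sum_congr rfl fun m _ => by ring
    have hposB : 0 < B + (∑ m, ε m * Sq m) / 2 := by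
      have h1 : -|B| ≤ B := neg_abs_le B
      linarith
    have hfin : 0 < aa * cc * (B + (∑ m, ε m * Sq m) / 2) :=
      mul_pos (mul_pos ha hc) hposB
    rw [hT1, hT2]
    linarith [hT3sum, hfin]
  refine ⟨SC, ?_⟩
  intro γ σ hγ hσ hmγ hmσ
  by_contra hne
  have hmem : ((1/2 : ℝ)) • γ + ((1/2 : ℝ)) • σ ∈
      {γ : ∀ n : Fin (N + 1), Fin (K n) → ℝ | ∀ n, γ n ∈ stdSimplex ℝ (Fin (K n))} :=
    hconv hγ hσ (by norm_num) (by norm_num) (by norm_num)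
  have h1 := SC.2 hγ hσ hne (by norm_num : (0:ℝ) < 1/2) (by norm_num : (0:ℝ) < 1/2)
    (by norm_num)
  simp only [smul_eq_mul] at h1
  have h2 := hmγ _ hmem
  have h3 := hmγ σ hσ
  have h4 := hmσ γ hγ
  linarith
end

section
/- Let m ∈ ℕ, let s : ℝ^m → ℝ^m be Lipschitz continuous with constant L_s > 0 with respect to the Euclidean norm, let G, H ∈ ℝ^{m × m}, let b ∈ ℝ^m, and suppose L_s · (‖G‖₂ + ‖H‖₂) < 1. Then: (i) for every y ∈ ℝ^m there is a unique x ∈ ℝ^m satisfying x = s(Gx + Hy + b); denote it Φ(y); (ii) Φ : ℝ^m → ℝ^m is Lipschitz with constant L̃ := L_s ‖H‖₂ / (1 − L_s ‖G‖₂), and L̃ < 1; (iii) Φ has a unique fixed point γ̂, and for any initial point γ⁰ the iterates γ^{k+1} = Φ(γ^k) satisfy ‖γ^{k+1} − γ̂‖₂ ≤ (L̃^k / (1 − L̃)) · ‖γ¹ − γ⁰‖₂. -/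
/-- **Convergence of the implicit fixed-point (layer-by-layer) iteration.**
Let `s : ℝ^m → ℝ^m` be Lipschitz with constant `L_s > 0`, let `G, H` be `m × m`
matrices and `b ∈ ℝ^m`, and assume `L_s (‖G‖₂ + ‖H‖₂) < 1`.  Then:
(i) for every `y` the equation `x = s (G x + H y + b)` has a unique solution
`Φ y`; (ii) `Φ` is Lipschitz with constant `L̃ = L_s ‖H‖₂ / (1 − L_s ‖G‖₂) < 1`;
(iii) `Φ` has a unique fixed point `γ̂`, and for every initial point `γ⁰` the
iterates `γ^{k+1} = Φ γ^k` satisfy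
`‖γ^{k+1} − γ̂‖ ≤ (L̃^k / (1 − L̃)) ‖γ¹ − γ⁰‖`. -/
theorem implicit_fixed_point_contraction
    (m : ℕ) (s : EuclideanSpace ℝ (Fin m) → EuclideanSpace ℝ (Fin m))
    (Ls : ℝ) (hLs : 0 < Ls)
    (hs : ∀ x y, ‖s x - s y‖ ≤ Ls * ‖x - y‖)
    (G H : Matrix (Fin m) (Fin m) ℝ) (b : EuclideanSpace ℝ (Fin m))
    (hcond : Ls * (specNorm G + specNorm H) < 1) :
    ∃ Φ : EuclideanSpace ℝ (Fin m) → EuclideanSpace ℝ (Fin m),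
      (∀ y, Φ y = s (Matrix.toEuclideanLin G (Φ y) + Matrix.toEuclideanLin H y + b)) ∧
      (∀ y x, x = s (Matrix.toEuclideanLin G x + Matrix.toEuclideanLin H y + b) → x = Φ y) ∧
      (∀ y₁ y₂, ‖Φ y₁ - Φ y₂‖
          ≤ (Ls * specNorm H / (1 - Ls * specNorm G)) * ‖y₁ - y₂‖) ∧
      (Ls * specNorm H / (1 - Ls * specNorm G) < 1) ∧
      ∃ γhat : EuclideanSpace ℝ (Fin m),
        Φ γhat = γhat ∧ (∀ γ, Φ γ = γ → γ = γhat) ∧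
        ∀ (γ0 : EuclideanSpace ℝ (Fin m)) (k : ℕ),
          ‖Φ^[k + 1] γ0 - γhat‖
            ≤ (Ls * specNorm H / (1 - Ls * specNorm G)) ^ k
                / (1 - Ls * specNorm H / (1 - Ls * specNorm G)) * ‖Φ γ0 - γ0‖ := by
  classical
  have hg0 : (0:ℝ) ≤ specNorm G := norm_nonneg _
  have hh0 : (0:ℝ) ≤ specNorm H := norm_nonneg _
  have hbound : ∀ (A : Matrix (Fin m) (Fin m) ℝ) (v : EuclideanSpace ℝ (Fin m)),
      ‖Matrix.toEuclideanLin A v‖ ≤ specNorm A * ‖v‖ := fun A v =>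
    (LinearMap.toContinuousLinearMap (Matrix.toEuclideanLin A)).le_opNorm v
  have hLsg : Ls * specNorm G < 1 := by nlinarith
  have h1g : 0 < 1 - Ls * specNorm G := by linarith
  set Lt : ℝ := Ls * specNorm H / (1 - Ls * specNorm G) with hLtdef
  have hLt0 : 0 ≤ Lt := div_nonneg (by positivity) h1g.le
  have hLt1 : Lt < 1 := by
    rw [hLtdef, div_lt_one h1g]; nlinarith
  set f : EuclideanSpace ℝ (Fin m) → EuclideanSpace ℝ (Fin m) → EuclideanSpace ℝ (Fin m) :=
    fun y x => s (Matrix.toEuclideanLin G x + Matrix.toEuclideanLin H y + b) with hfdef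
  -- key distance estimate
  have hkey : ∀ y₁ y₂ x₁ x₂, ‖f y₁ x₁ - f y₂ x₂‖
      ≤ Ls * specNorm G * ‖x₁ - x₂‖ + Ls * specNorm H * ‖y₁ - y₂‖ := by
    intro y₁ y₂ x₁ x₂
    have h1 : ‖f y₁ x₁ - f y₂ x₂‖
        ≤ Ls * ‖(Matrix.toEuclideanLin G x₁ + Matrix.toEuclideanLin H y₁ + b)
            - (Matrix.toEuclideanLin G x₂ + Matrix.toEuclideanLin H y₂ + b)‖ := hs _ _
    have h2 : (Matrix.toEuclideanLin G x₁ + Matrix.toEuclideanLin H y₁ + b)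
            - (Matrix.toEuclideanLin G x₂ + Matrix.toEuclideanLin H y₂ + b)
        = Matrix.toEuclideanLin G (x₁ - x₂) + Matrix.toEuclideanLin H (y₁ - y₂) := by
      simp only [map_sub]; abel
    have h3 : ‖Matrix.toEuclideanLin G (x₁ - x₂) + Matrix.toEuclideanLin H (y₁ - y₂)‖
        ≤ specNorm G * ‖x₁ - x₂‖ + specNorm H * ‖y₁ - y₂‖ :=
      (norm_add_le _ _).trans (add_le_add (hbound G _) (hbound H _))
    rw [h2] at h1
    calc ‖f y₁ x₁ - f y₂ x₂‖ ≤ Ls * (specNorm G * ‖x₁ - x₂‖ + specNorm H * ‖y₁ - y₂‖) :=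
          h1.trans (by nlinarith [norm_nonneg (Matrix.toEuclideanLin G (x₁-x₂) + Matrix.toEuclideanLin H (y₁-y₂))])
      _ = Ls * specNorm G * ‖x₁ - x₂‖ + Ls * specNorm H * ‖y₁ - y₂‖ := by ring
  have hcontr : ∀ y, ContractingWith (Real.toNNReal (Ls * specNorm G)) (f y) := by
    intro y
    refine ⟨?_, LipschitzWith.of_dist_le_mul fun x₁ x₂ => ?_⟩
    · rw [← NNReal.coe_lt_coe, Real.coe_toNNReal _ (by positivity)]
      exact_mod_cast hLsg
    · rw [Real.coe_toNNReal _ (by positivity)]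
      simp only [dist_eq_norm]
      have := hkey y y x₁ x₂
      simpa using this
  set Φ : EuclideanSpace ℝ (Fin m) → EuclideanSpace ℝ (Fin m) :=
    fun y => ContractingWith.fixedPoint (f y) (hcontr y) with hΦdef
  have hΦfix : ∀ y, f y (Φ y) = Φ y := fun y => (hcontr y).fixedPoint_isFixedPt
  have hΦlip : ∀ y₁ y₂, ‖Φ y₁ - Φ y₂‖ ≤ Lt * ‖y₁ - y₂‖ := by
    intro y₁ y₂
    have h1 : ‖Φ y₁ - Φ y₂‖
        ≤ Ls * specNorm G * ‖Φ y₁ - Φ y₂‖ + Ls * specNorm H * ‖y₁ - y₂‖ := by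
      conv_lhs => rw [← hΦfix y₁, ← hΦfix y₂]
      exact hkey y₁ y₂ _ _
    rw [hLtdef, div_mul_eq_mul_div, le_div_iff₀ h1g]
    nlinarith [norm_nonneg (Φ y₁ - Φ y₂)]
  refine ⟨Φ, fun y => (hΦfix y).symm, fun y x hx => (hcontr y).fixedPoint_unique hx.symm,
    hΦlip, hLt1, ?_⟩
  have hΦcontr : ContractingWith (Real.toNNReal Lt) Φ := by
    refine ⟨?_, LipschitzWith.of_dist_le_mul fun y₁ y₂ => ?_⟩
    · rw [← NNReal.coe_lt_coe, Real.coe_toNNReal _ hLt0]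
      exact_mod_cast hLt1
    · rw [Real.coe_toNNReal _ hLt0]
      simp only [dist_eq_norm]
      exact hΦlip y₁ y₂
  refine ⟨ContractingWith.fixedPoint Φ hΦcontr, hΦcontr.fixedPoint_isFixedPt,
    fun γ hγ => hΦcontr.fixedPoint_unique hγ, fun γ0 k => ?_⟩
  have := hΦcontr.apriori_dist_iterate_fixedPoint_le γ0 (k + 1)
  rw [Real.coe_toNNReal _ hLt0] at this
  simp only [dist_eq_norm] at this
  rw [← norm_sub_rev (Φ γ0) γ0] at this
  refine this.trans ?_
  rw [div_mul_eq_mul_div, mul_comm]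
  have hpow : Lt ^ (k + 1) ≤ Lt ^ k := pow_le_pow_of_le_one hLt0 hLt1.le (by omega)
  have h1L : 0 < 1 - Lt := by linarith
  gcongr
end
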